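/- arXiv:2306.14468 — 2 statements merged into one kernel-verified Lean document; each statement's English description precedes it below -/
import Mathlib

section
/- Let $\phi_1, \dots, \phi_K \in \mathbb{R}^d$ with $\|\phi_i\|_2 \le 1$, let $\theta_1, \dots, \theta_K, \theta^* \in \mathbb{R}^d$ with $\|\theta_i\|_2 \le 1$ and $\|\theta^*\|_2 \le 1$, and let $\beta > 0$. Suppose that for every $k \in \{1,\dots,K\}$, $\sum_{i=1}^{k-1} \left((\theta_k - \theta^*)^T \phi_i\right)^2 \le \beta$. Then for every $k \in \{1,\dots,K\}$, $\sum_{i=1}^{k} \left((\theta_i - \theta^*)^T \phi_i\right)^2 \le 2(\beta + 4)\, d \log\left(1 + \frac{4k}{d}\right)$. -/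
/-!
Write `V_j = I + ∑_{i ≤ j} φ_i φ_iᵀ` and `w_i = φ_iᵀ V_{i-1}⁻¹ φ_i`. The out-of-sample hypothesis
together with `‖θ_i - θ*‖² ≤ 4` gives `‖θ_i - θ*‖²_{V_{i-1}} ≤ β + 4`, so Cauchy–Schwarz in the
`V_{i-1}`-geometry bounds the in-sample error at step `i` by `(β + 4) w_i`, and trivially by `4`;
hence by `(β + 4) min (w_i, 1) ≤ 2 (β + 4) log (1 + w_i)`. By the matrix determinant lemma
`∏_{i ≤ k} (1 + w_i) = det V_k`, and AM-GM on the eigenvalues gives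
`det V_k ≤ (tr V_k / d)^d ≤ (1 + k / d)^d`.
-/

open Matrix Finset

theorem Real.prod_le_sum_div_card_pow {ι : Type*} (s : Finset ι) {z : ι → ℝ}
    (hz : ∀ i ∈ s, 0 ≤ z i) : ∏ i ∈ s, z i ≤ ((∑ i ∈ s, z i) / #s) ^ #s := by
  rcases s.eq_empty_or_nonempty with rfl | hs
  · simp
  have hcard : (#s : ℝ) ≠ 0 := by exact_mod_cast hs.card_pos.ne'
  have hamgm := Real.geom_mean_le_arith_mean_weighted s (fun _ => (#s : ℝ)⁻¹) z
    (fun _ _ => by positivity) (by simp [hcard]) hz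
  calc ∏ i ∈ s, z i = (∏ i ∈ s, z i ^ (#s : ℝ)⁻¹) ^ #s := by
        rw [← prod_pow]
        exact prod_congr rfl fun i hi => (Real.rpow_inv_natCast_pow (hz i hi) hs.card_pos.ne').symm
    _ ≤ (∑ i ∈ s, (#s : ℝ)⁻¹ * z i) ^ #s :=
        pow_le_pow_left₀ (prod_nonneg fun i hi => Real.rpow_nonneg (hz i hi) _) hamgm _
    _ = ((∑ i ∈ s, z i) / #s) ^ #s := by rw [← mul_sum, inv_mul_eq_div]

theorem Real.min_one_le_two_mul_log_one_add {u : ℝ} (hu : 0 ≤ u) :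
    min u 1 ≤ 2 * Real.log (1 + u) := by
  have hlog : 1 - (1 + u)⁻¹ ≤ Real.log (1 + u) := Real.one_sub_inv_le_log_of_pos (by linarith)
  have hfrac : 1 - (1 + u)⁻¹ = u / (1 + u) := by field_simp; ring
  have hmin : min u 1 ≤ 2 * (u / (1 + u)) := by
    rw [mul_div_assoc', le_div_iff₀ (by linarith)]
    rcases le_total u 1 with h | h
    · rw [min_eq_left h]; nlinarith
    · rw [min_eq_right h]; linarith
  linarith

namespace Matrix

variable {n : Type*} [Fintype n] [DecidableEq n]

theorem det_add_vecMulVec {α : Type*} [CommRing α] {A : Matrix n n α} (hA : IsUnit A.det)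
    (u v : n → α) : (A + vecMulVec u v).det = A.det * (1 + v ⬝ᵥ (A⁻¹ *ᵥ u)) := by
  have hfactor : A + vecMulVec u v = A * (1 + vecMulVec (A⁻¹ *ᵥ u) v) := by
    rw [Matrix.mul_add, Matrix.mul_one, mul_vecMulVec, mulVec_mulVec,
      mul_nonsing_inv _ hA, one_mulVec]
  rw [hfactor, det_mul, vecMulVec_eq Unit, det_one_add_replicateCol_mul_replicateRow]

theorem PosDef.sq_dotProduct_le {M : Matrix n n ℝ} (hM : M.PosDef) (x y : n → ℝ) :
    (x ⬝ᵥ y) ^ 2 ≤ (x ⬝ᵥ (M *ᵥ x)) * (y ⬝ᵥ (M⁻¹ *ᵥ y)) := by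
  set z := M⁻¹ *ᵥ y
  have hMz : M *ᵥ z = y := by
    rw [mulVec_mulVec, mul_nonsing_inv _ hM.det_pos.ne'.isUnit, one_mulVec]
  have hsymm : z ⬝ᵥ (M *ᵥ x) = x ⬝ᵥ y := by
    rw [dotProduct_mulVec, ← mulVec_transpose, ← conjTranspose_eq_transpose_of_trivial,
      hM.isHermitian, hMz, dotProduct_comm]
  have hquad : ∀ t : ℝ, 0 ≤ (z ⬝ᵥ y) * (t * t) + 2 * (x ⬝ᵥ y) * t + x ⬝ᵥ (M *ᵥ x) := by
    intro t
    have := hM.posSemidef.dotProduct_mulVec_nonneg (x + t • z)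
    simp only [star_trivial, mulVec_add, mulVec_smul, hMz, add_dotProduct, dotProduct_add,
      smul_dotProduct, dotProduct_smul, hsymm, smul_eq_mul] at this
    linear_combination this
  have := discrim_le_zero hquad
  rw [discrim, dotProduct_comm z y] at this
  linarith

theorem PosDef.sq_dotProduct_le_mul_min_one {M : Matrix n n ℝ} (hM : M.PosDef) {x y : n → ℝ}
    {B : ℝ} (hx : x ⬝ᵥ (M *ᵥ x) ≤ B) (hxy : (x ⬝ᵥ y) ^ 2 ≤ B) :
    (x ⬝ᵥ y) ^ 2 ≤ B * min (y ⬝ᵥ (M⁻¹ *ᵥ y)) 1 := by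
  rcases le_total (y ⬝ᵥ (M⁻¹ *ᵥ y)) 1 with h | h
  · have hy : 0 ≤ y ⬝ᵥ (M⁻¹ *ᵥ y) := by
      simpa using hM.inv.posSemidef.dotProduct_mulVec_nonneg y
    rw [min_eq_left h]
    exact (hM.sq_dotProduct_le x y).trans (mul_le_mul_of_nonneg_right hx hy)
  · rwa [min_eq_right h, mul_one]

theorem PosSemidef.det_le_trace_div_card_pow {A : Matrix n n ℝ} (hA : A.PosSemidef) :
    A.det ≤ (A.trace / Fintype.card n) ^ Fintype.card n := by
  rw [hA.isHermitian.det_eq_prod_eigenvalues, hA.isHermitian.trace_eq_sum_eigenvalues]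
  simpa using Real.prod_le_sum_div_card_pow univ fun i _ => hA.eigenvalues_nonneg i

end Matrix

theorem sq_dotProduct_le_dotProduct_self_mul {n : Type*} [Fintype n] (x y : n → ℝ) :
    (x ⬝ᵥ y) ^ 2 ≤ (x ⬝ᵥ x) * (y ⬝ᵥ y) := by
  classical
  simpa using PosDef.one.sq_dotProduct_le x y

theorem dotProduct_sub_self_le {n : Type*} [Fintype n] (a b : n → ℝ) :
    (a - b) ⬝ᵥ (a - b) ≤ 2 * (a ⬝ᵥ a) + 2 * (b ⬝ᵥ b) := by
  simp only [dotProduct, mul_sum, ← sum_add_distrib, Pi.sub_apply]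
  exact sum_le_sum fun i _ => by nlinarith [sq_nonneg (a i + b i)]

section EllipticalPotential

variable {n : Type*} [DecidableEq n] (φ : ℕ → n → ℝ)

noncomputable def designMatrix (k : ℕ) : Matrix n n ℝ :=
  1 + ∑ i ∈ Icc 1 k, vecMulVec (φ i) (φ i)

theorem designMatrix_succ (k : ℕ) :
    designMatrix φ (k + 1) = designMatrix φ k + vecMulVec (φ (k + 1)) (φ (k + 1)) := by
  rw [designMatrix, designMatrix, sum_Icc_succ_top (Nat.le_add_left 1 k), add_assoc]

variable [Fintype n]

noncomputable def ellipticalPotential (i : ℕ) : ℝ :=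
  φ i ⬝ᵥ ((designMatrix φ (i - 1))⁻¹ *ᵥ φ i)

theorem posDef_designMatrix (k : ℕ) : (designMatrix φ k).PosDef :=
  PosDef.one.add_posSemidef <| posSemidef_sum _ fun i _ => by
    simpa using posSemidef_vecMulVec_self_star (φ i)

theorem dotProduct_designMatrix_mulVec (k : ℕ) (x : n → ℝ) :
    x ⬝ᵥ (designMatrix φ k *ᵥ x) = x ⬝ᵥ x + ∑ i ∈ Icc 1 k, (φ i ⬝ᵥ x) ^ 2 := by
  simp only [designMatrix, add_mulVec, one_mulVec, dotProduct_add, sum_mulVec, dotProduct_sum,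
    vecMulVec_mulVec, op_smul_eq_smul, dotProduct_smul, smul_eq_mul]
  congr 1
  exact sum_congr rfl fun i _ => by rw [dotProduct_comm x, sq]

theorem trace_designMatrix (k : ℕ) :
    (designMatrix φ k).trace = Fintype.card n + ∑ i ∈ Icc 1 k, φ i ⬝ᵥ φ i := by
  simp [designMatrix, trace_sum, trace_vecMulVec]

theorem ellipticalPotential_nonneg (i : ℕ) : 0 ≤ ellipticalPotential φ i := by
  simpa [ellipticalPotential] using
    (posDef_designMatrix φ (i - 1)).inv.posSemidef.dotProduct_mulVec_nonneg (φ i)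

theorem det_designMatrix (k : ℕ) :
    (designMatrix φ k).det = ∏ i ∈ Icc 1 k, (1 + ellipticalPotential φ i) := by
  induction k with
  | zero => simp [designMatrix]
  | succ k ih =>
    rw [designMatrix_succ, det_add_vecMulVec (posDef_designMatrix φ k).det_pos.ne'.isUnit, ih,
      prod_Icc_succ_top (Nat.le_add_left 1 k), ellipticalPotential, Nat.add_sub_cancel]

theorem sum_log_one_add_ellipticalPotential_le (k : ℕ) :
    ∑ i ∈ Icc 1 k, Real.log (1 + ellipticalPotential φ i)
      ≤ Fintype.card n * Real.log (1 + (∑ i ∈ Icc 1 k, φ i ⬝ᵥ φ i) / Fintype.card n) := by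
  have hpos : ∀ i ∈ Icc 1 k, 1 + ellipticalPotential φ i ≠ 0 := fun i _ =>
    (add_pos_of_pos_of_nonneg one_pos (ellipticalPotential_nonneg φ i)).ne'
  have hdet := (posDef_designMatrix φ k).posSemidef.det_le_trace_div_card_pow
  rw [← Real.log_prod hpos, ← det_designMatrix, ← Real.log_pow]
  refine (Real.log_le_log (posDef_designMatrix φ k).det_pos hdet).trans_eq ?_
  rw [trace_designMatrix]
  rcases (Fintype.card n).eq_zero_or_pos with h | h
  · simp [h]
  · congr 2; field_simp

theorem sum_min_ellipticalPotential_le (hφ : ∀ i, φ i ⬝ᵥ φ i ≤ 1) (k : ℕ) :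
    ∑ i ∈ Icc 1 k, min (ellipticalPotential φ i) 1
      ≤ 2 * Fintype.card n * Real.log (1 + k / Fintype.card n) := by
  have hsum : ∑ i ∈ Icc 1 k, φ i ⬝ᵥ φ i ≤ k := by
    simpa using sum_le_sum fun i (_ : i ∈ Icc 1 k) => hφ i
  calc ∑ i ∈ Icc 1 k, min (ellipticalPotential φ i) 1
      ≤ ∑ i ∈ Icc 1 k, 2 * Real.log (1 + ellipticalPotential φ i) :=
        sum_le_sum fun i _ => Real.min_one_le_two_mul_log_one_add (ellipticalPotential_nonneg φ i)
    _ ≤ 2 * (Fintype.card n * Real.log (1 + (∑ i ∈ Icc 1 k, φ i ⬝ᵥ φ i) / Fintype.card n)) := by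
        rw [← mul_sum]
        exact mul_le_mul_of_nonneg_left (sum_log_one_add_ellipticalPotential_le φ k) two_pos.le
    _ ≤ 2 * Fintype.card n * Real.log (1 + k / Fintype.card n) := by
        rw [← mul_assoc]
        have := sum_nonneg fun i (_ : i ∈ Icc 1 k) => dotProduct_star_self_nonneg (φ i)
        gcongr

theorem sq_dotProduct_le_mul_min_ellipticalPotential {β : ℝ} (hβ : 0 ≤ β) {i : ℕ}
    (hφ : φ i ⬝ᵥ φ i ≤ 1) {e : n → ℝ} (he : e ⬝ᵥ e ≤ 4)
    (hout : ∑ j ∈ Icc 1 (i - 1), (e ⬝ᵥ φ j) ^ 2 ≤ β) :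
    (e ⬝ᵥ φ i) ^ 2 ≤ (β + 4) * min (ellipticalPotential φ i) 1 := by
  refine (posDef_designMatrix φ (i - 1)).sq_dotProduct_le_mul_min_one ?_ ?_
  · rw [dotProduct_designMatrix_mulVec]
    simp_rw [dotProduct_comm (φ _)]
    linarith
  · calc (e ⬝ᵥ φ i) ^ 2 ≤ (e ⬝ᵥ e) * (φ i ⬝ᵥ φ i) := sq_dotProduct_le_dotProduct_self_mul _ _
      _ ≤ 4 * 1 := mul_le_mul he hφ (dotProduct_star_self_nonneg _) (by norm_num)
      _ ≤ β + 4 := by linarith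

end EllipticalPotential

theorem stmt_16_general (d K : ℕ) (β : ℝ) (hβ : 0 < β)
    (φ : ℕ → (Fin d → ℝ)) (θ : ℕ → (Fin d → ℝ)) (θs : Fin d → ℝ)
    (hφ : ∀ i, Real.sqrt (φ i ⬝ᵥ φ i) ≤ 1)
    (hθ : ∀ i, Real.sqrt (θ i ⬝ᵥ θ i) ≤ 1)
    (hθs : Real.sqrt (θs ⬝ᵥ θs) ≤ 1)
    (h : ∀ k ∈ Finset.Icc 1 K,
      ∑ i ∈ Finset.Icc 1 (k - 1), ((θ k - θs) ⬝ᵥ φ i) ^ 2 ≤ β) :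
    ∀ k ∈ Finset.Icc 1 K,
      ∑ i ∈ Finset.Icc 1 k, ((θ i - θs) ⬝ᵥ φ i) ^ 2
        ≤ 2 * (β + 4) * d * Real.log (1 + 4 * k / d) := by
  intro k hk
  have hφ1 : ∀ i, φ i ⬝ᵥ φ i ≤ 1 := fun i => Real.sqrt_le_one.mp (hφ i)
  have hstep : ∀ i ∈ Icc 1 k,
      ((θ i - θs) ⬝ᵥ φ i) ^ 2 ≤ (β + 4) * min (ellipticalPotential φ i) 1 := by
    intro i hi
    have herr : (θ i - θs) ⬝ᵥ (θ i - θs) ≤ 4 := by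
      linarith [dotProduct_sub_self_le (θ i) θs, Real.sqrt_le_one.mp (hθ i),
        Real.sqrt_le_one.mp hθs]
    exact sq_dotProduct_le_mul_min_ellipticalPotential φ hβ.le (hφ1 i) herr
      (h i (Icc_subset_Icc_right (mem_Icc.mp hk).2 hi))
  calc ∑ i ∈ Icc 1 k, ((θ i - θs) ⬝ᵥ φ i) ^ 2
      ≤ (β + 4) * ∑ i ∈ Icc 1 k, min (ellipticalPotential φ i) 1 := by
        rw [mul_sum]; exact sum_le_sum hstep
    _ ≤ (β + 4) * (2 * d * Real.log (1 + k / d)) := by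
        gcongr
        simpa using sum_min_ellipticalPotential_le φ hφ1 k
    _ = 2 * (β + 4) * d * Real.log (1 + k / d) := by ring
    _ ≤ 2 * (β + 4) * d * Real.log (1 + 4 * k / d) := by
        gcongr
        linarith [k.cast_nonneg (α := ℝ)]

theorem stmt_16 (d K : ℕ) (hd : 0 < d) (β : ℝ) (hβ : 0 < β)
    (φ : ℕ → (Fin d → ℝ)) (θ : ℕ → (Fin d → ℝ)) (θs : Fin d → ℝ)
    (hφ : ∀ i, Real.sqrt (φ i ⬝ᵥ φ i) ≤ 1)
    (hθ : ∀ i, Real.sqrt (θ i ⬝ᵥ θ i) ≤ 1)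
    (hθs : Real.sqrt (θs ⬝ᵥ θs) ≤ 1)
    (h : ∀ k ∈ Finset.Icc 1 K,
      ∑ i ∈ Finset.Icc 1 (k - 1), ((θ k - θs) ⬝ᵥ φ i) ^ 2 ≤ β) :
    ∀ k ∈ Finset.Icc 1 K,
      ∑ i ∈ Finset.Icc 1 k, ((θ i - θs) ⬝ᵥ φ i) ^ 2
        ≤ 2 * (β + 4) * d * Real.log (1 + 4 * k / d) :=
  stmt_16_general d K β hβ φ θ θs hφ hθ hθs h
end

section
/- Let $a_1, \dots, a_K$ be nonnegative reals bounded by $R^2$, let $\beta \ge R^2$, $d \ge 1$, and suppose that whenever we sort the sequence in decreasing order as $e_1 \ge \dots \ge e_K$, we have: for every $\alpha > 0$ and every $t$, if $e_t > \alpha$ then $t \le (\beta/\alpha + 1) d$. Then $\sum_{i=1}^{K} a_i \le 1 + d R^2 + 2 d \beta \log K$ (taking threshold $\omega = 1/K$). -/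
/-!
If at least `t` of the values are `≥ x` (so `x` is at most the `t`-th largest value `e_t`),
the counting hypothesis at every level `α < x` gives `(t - d) α ≤ β d`, hence
`e_t ≤ β d / (t - d)` for `t > d`, while `e_t ≤ R²` always. Summing the values in decreasing
order, the `t`-th one is at most `R²` for `t ≤ d` and at most `β d / (t - d)` afterwards, and
the tail is `β d` times the harmonic number `H_{K-d} ≤ 1 + log (K - 1) ≤ 2 log K`.
-/

open Finset Real

theorem sum_le_sum_Icc_of_forall_le_rank {ι M : Type*} [DecidableEq ι] [AddCommMonoid M]
    [LinearOrder M] [IsOrderedAddMonoid M] (s : Finset ι) (a : ι → M) (f : ℕ → M)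
    (h : ∀ i ∈ s, ∀ t ∈ Icc 1 #{j ∈ s | a i ≤ a j}, a i ≤ f t) :
    ∑ i ∈ s, a i ≤ ∑ t ∈ Icc 1 #s, f t := by
  -- Adding the elements in increasing order of `a`, each new one is the minimum, of rank `#s + 1`.
  induction s using Finset.induction_on_min_value a with
  | empty => simp
  | insert m s hm hmin ih =>
    have hrank_mono : ∀ i ∈ s, #{j ∈ s | a i ≤ a j} ≤ #{j ∈ insert m s | a i ≤ a j} :=
      fun i _ => card_le_card (filter_subset_filter _ (subset_insert m s))
    have hrank_m : #{j ∈ insert m s | a m ≤ a j} = #s + 1 := by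
      rw [filter_true_of_mem (by simpa using hmin), card_insert_of_notMem hm]
    rw [sum_insert hm, card_insert_of_notMem hm, ← Ico_add_one_right_eq_Icc,
      sum_Ico_succ_top (by omega), Ico_add_one_right_eq_Icc, add_comm (∑ t ∈ _, f t)]
    refine add_le_add (h m (mem_insert_self m s) _ ?_) (ih fun i hi t ht => ?_)
    · simp [hrank_m]
    · exact h i (mem_insert_of_mem hi) t (Icc_subset_Icc_right (hrank_mono i hi) ht)

theorem le_div_sub_of_le_card_filter_le {ι : Type*} (s : Finset ι) (a : ι → ℝ) {β : ℝ}
    (hβ : 0 ≤ β) (d : ℕ)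
    (hcount : ∀ α : ℝ, 0 < α → (#{j ∈ s | α < a j} : ℝ) ≤ (β / α + 1) * d)
    {x : ℝ} {t : ℕ} (hdt : d < t) (ht : t ≤ #{j ∈ s | x ≤ a j}) :
    x ≤ β * d / (t - d) := by
  have htd : (0 : ℝ) < t - d := sub_pos.2 (by exact_mod_cast hdt)
  refine le_of_forall_lt_imp_le_of_dense fun α hα => ?_
  rcases le_or_gt α 0 with hα0 | hα0
  · exact hα0.trans (by positivity)
  have hcard : (t : ℝ) ≤ (β / α + 1) * d := by
    refine le_trans ?_ (hcount α hα0)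
    exact_mod_cast ht.trans (card_le_card (monotone_filter_right s fun j _ hj => hα.trans_le hj))
  rw [le_div_iff₀ htd]
  have := mul_le_mul_of_nonneg_right hcard hα0.le
  rw [add_mul, one_mul, add_mul, div_mul_eq_mul_div, div_mul_cancel₀ _ hα0.ne'] at this
  linarith

theorem harmonic_sub_le_two_mul_log (K : ℕ) {d : ℕ} (hd : 1 ≤ d) :
    (harmonic (K - d) : ℝ) ≤ 2 * log K := by
  rcases Nat.eq_zero_or_pos (K - d) with h0 | hpos
  · simpa [h0] using Real.log_natCast_nonneg K
  have hK : (2 : ℝ) ≤ K := by exact_mod_cast (by omega : 2 ≤ K)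
  have hn : (1 : ℝ) ≤ (K - d : ℕ) := by exact_mod_cast hpos
  have hnK : ((K - d : ℕ) : ℝ) ≤ K - 1 := by
    rw [Nat.cast_sub (by omega)]; linarith [(show (1 : ℝ) ≤ d by exact_mod_cast hd)]
  -- `1 + log n = log (e n)` and `e (K - 1) ≤ 3 (K - 1) ≤ K ^ 2`
  calc (harmonic (K - d) : ℝ) ≤ 1 + log (K - d : ℕ) := harmonic_le_one_add_log _
    _ = log (exp 1 * (K - d : ℕ)) := by rw [log_mul (exp_ne_zero 1) (by positivity), log_exp]
    _ ≤ log (K * K) := by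
        refine log_le_log (by positivity) ?_
        have he : exp 1 ≤ 3 := exp_one_lt_d9.le.trans (by norm_num)
        nlinarith
    _ = 2 * log K := by rw [log_mul (by positivity) (by positivity)]; ring

theorem sum_Icc_ite_div_sub_le (K d : ℕ) (hd : 1 ≤ d) {c β : ℝ} (hc : 0 ≤ c)
    (hβ : 0 ≤ β) :
    ∑ t ∈ Icc 1 K, (if t ≤ d then c else β * d / (t - d)) ≤
      d * c + 2 * d * β * log K := by
  rw [sum_ite, sum_const, nsmul_eq_mul]
  have hlow : (#{t ∈ Icc 1 K | t ≤ d} : ℝ) ≤ d := by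
    have : #{t ∈ Icc 1 K | t ≤ d} ≤ #(Icc 1 d) :=
      card_le_card fun t ht => by simp only [mem_filter, mem_Icc] at ht ⊢; omega
    exact_mod_cast this.trans (by simp)
  have hhigh : {t ∈ Icc 1 K | ¬t ≤ d} = Ico (d + 1) (K + 1) := by
    ext t; simp only [mem_filter, mem_Icc, mem_Ico]; omega
  have hharm :
      ∑ t ∈ Ico (d + 1) (K + 1), β * d / ((t : ℝ) - d) = β * d * harmonic (K - d) := by
    rw [sum_Ico_eq_sum_range, harmonic, Nat.add_sub_add_right, Rat.cast_sum, mul_sum]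
    refine sum_congr rfl fun k _ => ?_
    push_cast
    rw [div_eq_mul_inv]; ring_nf
  rw [hhigh, hharm]
  have := harmonic_sub_le_two_mul_log K hd
  have hβd : 0 ≤ β * d := by positivity
  nlinarith

theorem stmt_18_general (K d : ℕ) (hd : 1 ≤ d) (R β : ℝ)
    (hβ : R ^ 2 ≤ β) (a : ℕ → ℝ)
    (hbound : ∀ i, a i ≤ R ^ 2)
    (hcount : ∀ α : ℝ, 0 < α →
      (((Finset.Icc 1 K).filter (fun i => α < a i)).card : ℝ) ≤ (β / α + 1) * d) :
    ∑ i ∈ Finset.Icc 1 K, a i ≤ 1 + d * R ^ 2 + 2 * d * β * Real.log K := by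
  have hβ0 : 0 ≤ β := (sq_nonneg R).trans hβ
  have hrank : ∑ i ∈ Icc 1 K, a i ≤
      ∑ t ∈ Icc 1 K, (if t ≤ d then R ^ 2 else β * d / (t - d)) := by
    simpa using sum_le_sum_Icc_of_forall_le_rank (Icc 1 K) a _ fun i _ t ht => by
      split_ifs with htd
      · exact hbound i
      · exact le_div_sub_of_le_card_filter_le _ a hβ0 d hcount (not_le.1 htd) (mem_Icc.1 ht).2
  linarith [sum_Icc_ite_div_sub_le K d hd (sq_nonneg R) hβ0]

theorem stmt_18 (K d : ℕ) (hK : 2 ≤ K) (hd : 1 ≤ d) (R β : ℝ) (hR : 0 < R)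
    (hβ : R ^ 2 ≤ β) (a : ℕ → ℝ) (hnn : ∀ i, 0 ≤ a i)
    (hbound : ∀ i, a i ≤ R ^ 2)
    (hcount : ∀ α : ℝ, 0 < α →
      (((Finset.Icc 1 K).filter (fun i => α < a i)).card : ℝ) ≤ (β / α + 1) * d) :
    ∑ i ∈ Finset.Icc 1 K, a i ≤ 1 + d * R ^ 2 + 2 * d * β * Real.log K :=
  stmt_18_general K d hd R β hβ a hbound hcount
end
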